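/- Suppose the clause c1 subsumes the clause c2, the ground literal ℓ1 subsumes the ground literal ℓ2, and c1', c2' are the unit propagations of c1 with ℓ1 and of c2 with ℓ2, respectively. Then c1' subsumes c2'. -/

import Mathlib

set_option maxHeartbeats 1000000

/-! ### Ground level: sorts, names, primitive terms, ground literals, worlds -/

/-- Sorts. -/
abbrev SSort := ℕ

/-- Standard names: countably infinitely many of each sort. -/
structure Name where
  sort : SSort
  idx : ℕ
deriving DecidableEq

/-- Function symbols: for each sort and arity, countably infinitely many. -/
structure FnSym where
  sort : SSort
  arity : ℕ
  idx : ℕ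
deriving DecidableEq

/-- A primitive term: a function symbol applied to standard names. -/
structure PrimTerm where
  fn : FnSym
  args : List Name
deriving DecidableEq

def PrimTerm.sort (t : PrimTerm) : SSort := t.fn.sort

/-- A ground term: a standard name or a primitive term. -/
inductive GTerm
  | name (n : Name)
  | prim (t : PrimTerm)
deriving DecidableEq

def GTerm.sort : GTerm → SSort
  | .name n => n.sort
  | .prim t => t.sort

/-- A ground literal `t = n` (`pos = true`) or `t ≠ n` (`pos = false`),
    where `t` is a standard name or a primitive term and `n` is a standard name. -/
structure GLit where
  pos : Bool
  lhs : GTerm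
  rhs : Name
deriving DecidableEq

/-- The negation `¬ℓ` of a ground literal. -/
def GLit.negate (l : GLit) : GLit := ⟨!l.pos, l.lhs, l.rhs⟩

/-- A world: a sort-preserving assignment of standard names to primitive terms. -/
structure World where
  val : PrimTerm → Name
  sort_eq : ∀ t, (val t).sort = t.sort

/-- The equality `t = n` holds in world `w`. -/
def World.eqHolds (w : World) : GTerm → Name → Prop
  | .name m, n => m = n
  | .prim t, n => w.val t = n

/-- World `w` satisfies the ground literal `l`. -/
def World.satLit (w : World) (l : GLit) : Prop :=
  if l.pos then w.eqHolds l.lhs l.rhs else ¬ w.eqHolds l.lhs l.rhs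

/-- A ground literal is valid: it is of the form `t = t`, or `n ≠ n'` for distinct
    names `n, n'`, or `t ≠ n` for `t, n` of distinct sorts. -/
def GLit.valid (l : GLit) : Prop :=
  (l.pos = true ∧ l.lhs = GTerm.name l.rhs) ∨
  (l.pos = false ∧ ∃ n : Name, l.lhs = GTerm.name n ∧ n ≠ l.rhs) ∨
  (l.pos = false ∧ l.lhs.sort ≠ l.rhs.sort)

/-- `l1` subsumes `l2`: they are identical, or of the form `t = n1` and `t ≠ n2`
    for distinct names `n1, n2`. -/
def GLit.subsumes (l1 l2 : GLit) : Prop :=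
  l1 = l2 ∨
  (l1.pos = true ∧ l2.pos = false ∧ l1.lhs = l2.lhs ∧ l1.rhs ≠ l2.rhs)

/-- `l1`, `l2` are complementary: of the form `t = t'` and `t ≠ t'` (in either order),
    or of the form `t = n1` and `t = n2` for distinct names `n1, n2`. -/
def GLit.compl (l1 l2 : GLit) : Prop :=
  (l1.lhs = l2.lhs ∧ l1.rhs = l2.rhs ∧ l1.pos ≠ l2.pos) ∨
  (l1.pos = true ∧ l2.pos = true ∧ l1.lhs = l2.lhs ∧ l1.rhs ≠ l2.rhs)

/-! ### Clauses and setups -/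

/-- A clause: a finite set of ground literals. -/
abbrev Clause := Finset GLit

/-- World `w` satisfies clause `c` iff it satisfies some literal of `c`. -/
def World.satClause (w : World) (c : Clause) : Prop := ∃ l ∈ c, w.satLit l

/-- A clause is valid when it contains a valid literal, or a literal `t = n` together
    with `t ≠ n`, or two literals `t ≠ n1`, `t ≠ n2` for distinct `n1, n2`. -/
def Clause.valid (c : Clause) : Prop :=
  (∃ l ∈ c, l.valid) ∨
  (∃ l1 ∈ c, ∃ l2 ∈ c,
    l1.pos = true ∧ l2.pos = false ∧ l1.lhs = l2.lhs ∧ l1.rhs = l2.rhs) ∨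
  (∃ l1 ∈ c, ∃ l2 ∈ c,
    l1.pos = false ∧ l2.pos = false ∧ l1.lhs = l2.lhs ∧ l1.rhs ≠ l2.rhs)

/-- Clause subsumption: every literal of `c1` subsumes some literal of `c2`. -/
def Clause.subsumes (c1 c2 : Clause) : Prop :=
  ∀ l1 ∈ c1, ∃ l2 ∈ c2, l1.subsumes l2

/-- The unit propagation of clause `c` with literal `l`: remove from `c` all literals
    complementary to `l`. -/
noncomputable def Clause.unitProp (c : Clause) (l : GLit) : Clause :=
  @Finset.filter _ (fun l' => ¬ l'.compl l) (Classical.decPred _) c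

/-- A setup: a set of ground clauses. -/
abbrev Setup := Set Clause

/-- `UP s`: the closure of `s` together with all valid (unit clauses of) literals
    under unit propagation. -/
inductive UPmem (s : Setup) : Clause → Prop
  | base {c : Clause} : c ∈ s → UPmem s c
  | validLit {l : GLit} : l.valid → UPmem s {l}
  | unitProp {c : Clause} {l : GLit} :
      UPmem s c → UPmem s {l} → UPmem s (c.unitProp l)

def UP (s : Setup) : Setup := {c | UPmem s c}

/-- `MaxS s`: `s` together with all valid clauses and all clauses subsumed by some
    clause of `s`. -/
def MaxS (s : Setup) : Setup :=
  s ∪ {c | c.valid} ∪ {c | ∃ c' ∈ s, Clause.subsumes c' c}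

def VP (s : Setup) : Setup := MaxS (UP s)

/-- `MinS s`: remove from `s` all valid clauses and all clauses subsumed by some
    other clause of `VP s`. -/
def MinS (s : Setup) : Setup :=
  {c | c ∈ s ∧ ¬ c.valid ∧ ¬ ∃ c' ∈ VP s, c' ≠ c ∧ Clause.subsumes c' c}

def WP (s : Setup) : Setup := MinS (UP s)

/-- A setup is obviously inconsistent when `UP s` contains the empty clause. -/
def obviouslyIncons (s : Setup) : Prop := (∅ : Clause) ∈ UP s

/-- The set of all literals occurring in clauses of `WP s`. -/
def litsOfWP (s : Setup) : Set GLit := {l | ∃ c ∈ WP s, l ∈ c}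

/-- A setup is potentially inconsistent. -/
def potentiallyIncons (s : Setup) : Prop :=
  obviouslyIncons s ∨
  (∃ l1 ∈ litsOfWP s, ∃ l2 ∈ litsOfWP s, GLit.compl l1 l2) ∨
  (∃ l ∈ litsOfWP s, l.pos = true ∧ l.rhs.sort ≠ l.lhs.sort) ∨
  (∃ t : PrimTerm, ∀ n : Name, n.sort = t.sort →
    (⟨false, GTerm.prim t, n⟩ : GLit) ∈ litsOfWP s)

/-! ### Syntax: variables, terms, atoms -/

/-- Variables, countably infinitely many of each sort. -/
structure Var where
  sort : SSort
  idx : ℕ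
deriving DecidableEq

/-- A variable or a name (possible argument of a function, and right-hand side
    of a literal). -/
inductive Atomic
  | var (x : Var)
  | name (n : Name)
deriving DecidableEq

/-- Left-hand side of a literal: a variable, a name, or a function applied to
    variables and names. -/
inductive LTerm
  | var (x : Var)
  | name (n : Name)
  | app (f : FnSym) (args : List Atomic)
deriving DecidableEq

/-- An (equality) atom `t1 = t2`. -/
structure Atom where
  lhs : LTerm
  rhs : Atomic
deriving DecidableEq

def Atomic.subst (x : Var) (n : Name) : Atomic → Atomic
  | .var y => if y = x then .name n else .var y
  | .name m => .name m

def LTerm.subst (x : Var) (n : Name) : LTerm → LTerm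
  | .var y => if y = x then .name n else .var y
  | .name m => .name m
  | .app f args => .app f (args.map (Atomic.subst x n))

def Atom.subst (x : Var) (n : Name) (a : Atom) : Atom :=
  ⟨a.lhs.subst x n, a.rhs.subst x n⟩

def Atomic.toName? : Atomic → Option Name
  | .var _ => none
  | .name n => some n

def LTerm.toGTerm? : LTerm → Option GTerm
  | .var _ => none
  | .name n => some (.name n)
  | .app f args => (args.mapM Atomic.toName?).map (fun ns => .prim ⟨f, ns⟩)

/-- The ground literal corresponding to an atom (with the given polarity), if the
    atom is ground. -/
def Atom.toGLit? (pos : Bool) (a : Atom) : Option GLit :=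
  a.lhs.toGTerm?.bind fun t => a.rhs.toName?.map fun n => ⟨pos, t, n⟩

def Atomic.vars : Atomic → Set Var
  | .var x => {x}
  | .name _ => ∅

def LTerm.vars : LTerm → Set Var
  | .var x => {x}
  | .name _ => ∅
  | .app _ args => {x | ∃ a ∈ args, x ∈ a.vars}

def Atom.vars (a : Atom) : Set Var := a.lhs.vars ∪ a.rhs.vars

/-- Sort-preserving assignments of names to variables. -/
def sortPreserving (σ : Var → Name) : Prop := ∀ x, (σ x).sort = x.sort

def Atomic.applySub (σ : Var → Name) : Atomic → Name
  | .var x => σ x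
  | .name n => n

def LTerm.applySub (σ : Var → Name) : LTerm → GTerm
  | .var x => .name (σ x)
  | .name n => .name n
  | .app f args => .prim ⟨f, args.map (Atomic.applySub σ)⟩

/-- The ground literal obtained from an atom by grounding all variables via `σ`. -/
def Atom.applySub (σ : Var → Name) (pos : Bool) (a : Atom) : GLit :=
  ⟨pos, a.lhs.applySub σ, Atomic.applySub σ a.rhs⟩

/-! ### The logic L -/

/-- Formulas of the logic L. -/
inductive LFormula
  | atom (a : Atom)
  | neg (α : LFormula)
  | or (α β : LFormula)
  | ex (x : Var) (α : LFormula)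
  | K (α : LFormula)
  | M (α : LFormula)
  | O (α : LFormula)

namespace LFormula

def subst (x : Var) (n : Name) : LFormula → LFormula
  | atom a => atom (a.subst x n)
  | neg α => neg (α.subst x n)
  | or α β => or (α.subst x n) (β.subst x n)
  | ex y α => if y = x then ex y α else ex y (α.subst x n)
  | K α => K (α.subst x n)
  | M α => M (α.subst x n)
  | O α => O (α.subst x n)

/-- Free variables. -/
def free : LFormula → Set Var
  | atom a => a.vars
  | neg α => α.free
  | or α β => α.free ∪ β.free
  | ex x α => α.free \ {x}
  | K α => α.free
  | M α => α.free
  | O α => α.free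

/-- Objective: mentions no modal operator. -/
def objective : LFormula → Prop
  | atom _ => True
  | neg α => α.objective
  | or α β => α.objective ∧ β.objective
  | ex _ α => α.objective
  | K _ => False
  | M _ => False
  | O _ => False

def fsize : LFormula → ℕ
  | atom _ => 1
  | neg α => α.fsize + 1
  | or α β => α.fsize + β.fsize + 1
  | ex _ α => α.fsize + 1
  | K α => α.fsize + 1
  | M α => α.fsize + 1
  | O α => α.fsize + 1

theorem fsize_subst (x : Var) (n : Name) :
    ∀ α : LFormula, (α.subst x n).fsize = α.fsize := by
  intro α
  induction α with
  | atom a => rfl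
  | neg α ih => simp [subst, fsize, ih]
  | or α β ih1 ih2 => simp [subst, fsize, ih1, ih2]
  | ex y α ih =>
    simp only [subst]
    split <;> simp [fsize, ih]
  | K α ih => simp [subst, fsize, ih]
  | M α ih => simp [subst, fsize, ih]
  | O α ih => simp [subst, fsize, ih]

/-- Abbreviation: conjunction. -/
def and (α β : LFormula) : LFormula := neg (or (neg α) (neg β))

/-- Abbreviation: implication. -/
def imp (α β : LFormula) : LFormula := or (neg α) β

/-- Abbreviation: equivalence. -/
def equi (α β : LFormula) : LFormula := (α.imp β).and (β.imp α)

/-- Abbreviation: universal quantification. -/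
def fa (x : Var) (α : LFormula) : LFormula := neg (ex x (neg α))

end LFormula

/-- Semantics of L. -/
def LSat : Set World → World → LFormula → Prop
  | _, w, .atom a =>
    match a.toGLit? true with
    | some g => w.satLit g
    | none => False
  | e, w, .neg α => ¬ LSat e w α
  | e, w, .or α β => LSat e w α ∨ LSat e w β
  | e, w, .ex x α => ∃ n : Name, n.sort = x.sort ∧ LSat e w (α.subst x n)
  | e, _, .K α => ∀ w' ∈ e, LSat e w' α
  | e, _, .M α => ∃ w' ∈ e, LSat e w' α
  | e, _, .O α => e = {w' | LSat e w' α}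
termination_by e w α => α.fsize
decreasing_by
  all_goals simp only [LFormula.fsize, LFormula.fsize_subst]
  all_goals omega

/-- Validity in L. -/
def LValid (α : LFormula) : Prop := ∀ (e : Set World) (w : World), LSat e w α

/-- Entailment in L. -/
def LEntails (α β : LFormula) : Prop :=
  ∀ (e : Set World) (w : World), LSat e w α → LSat e w β

/-! ### The logic LL -/

/-- Formulas of the logic LL. -/
inductive LLFormula
  | atom (a : Atom)
  | neg (α : LLFormula)
  | or (α β : LLFormula)
  | ex (x : Var) (α : LLFormula)
  | K (k : ℕ) (α : LLFormula)
  | M (k : ℕ) (α : LLFormula)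
  | O (α : LLFormula)
  | G (α : LLFormula)

namespace LLFormula

def subst (x : Var) (n : Name) : LLFormula → LLFormula
  | atom a => atom (a.subst x n)
  | neg α => neg (α.subst x n)
  | or α β => or (α.subst x n) (β.subst x n)
  | ex y α => if y = x then ex y α else ex y (α.subst x n)
  | K k α => K k (α.subst x n)
  | M k α => M k (α.subst x n)
  | O α => O (α.subst x n)
  | G α => G (α.subst x n)

/-- Free variables. -/
def free : LLFormula → Set Var
  | atom a => a.vars
  | neg α => α.free
  | or α β => α.free ∪ β.free
  | ex x α => α.free \ {x}
  | K _ α => α.free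
  | M _ α => α.free
  | O α => α.free
  | G α => α.free

/-- Objective: mentions no modal operator. -/
def objective : LLFormula → Prop
  | atom _ => True
  | neg α => α.objective
  | or α β => α.objective ∧ β.objective
  | ex _ α => α.objective
  | K _ _ => False
  | M _ _ => False
  | O _ => False
  | G _ => False

/-- Subjective: mentions no function application outside a modal operator. -/
def subjective : LLFormula → Prop
  | atom a => ∀ (f : FnSym) (args : List Atomic), a.lhs ≠ LTerm.app f args
  | neg α => α.subjective
  | or α β => α.subjective ∧ β.subjective
  | ex _ α => α.subjective
  | K _ _ => True
  | M _ _ => True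
  | O _ => True
  | G _ => True

/-- Propositional: mentions no quantifier. -/
def propositional : LLFormula → Prop
  | atom _ => True
  | neg α => α.propositional
  | or α β => α.propositional ∧ β.propositional
  | ex _ _ => False
  | K _ α => α.propositional
  | M _ α => α.propositional
  | O α => α.propositional
  | G α => α.propositional

/-- Mentions no `O`. -/
def noO : LLFormula → Prop
  | atom _ => True
  | neg α => α.noO
  | or α β => α.noO ∧ β.noO
  | ex _ α => α.noO
  | K _ α => α.noO
  | M _ α => α.noO
  | O _ => False
  | G α => α.noO

/-- Mentions no `G`. -/
def noG : LLFormula → Prop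
  | atom _ => True
  | neg α => α.noG
  | or α β => α.noG ∧ β.noG
  | ex _ α => α.noG
  | K _ α => α.noG
  | M _ α => α.noG
  | O α => α.noG
  | G _ => False

/-- Mentions no `K_k` and no `M_k`. -/
def kmFree : LLFormula → Prop
  | atom _ => True
  | neg α => α.kmFree
  | or α β => α.kmFree ∧ β.kmFree
  | ex _ α => α.kmFree
  | K _ _ => False
  | M _ _ => False
  | O α => α.kmFree
  | G α => α.kmFree

/-- No `K_k` or `M_k` occurs in the scope of a negation. -/
def noNegatedKM : LLFormula → Prop
  | atom _ => True
  | neg α => α.kmFree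
  | or α β => α.noNegatedKM ∧ β.noNegatedKM
  | ex _ α => α.noNegatedKM
  | K _ α => α.noNegatedKM
  | M _ α => α.noNegatedKM
  | O α => α.noNegatedKM
  | G α => α.noNegatedKM

/-- Replace every `K_l`/`M_l` by `K_k`/`M_k`. -/
def setLevel (k : ℕ) : LLFormula → LLFormula
  | atom a => atom a
  | neg α => neg (α.setLevel k)
  | or α β => or (α.setLevel k) (β.setLevel k)
  | ex x α => ex x (α.setLevel k)
  | K _ α => K k (α.setLevel k)
  | M _ α => M k (α.setLevel k)
  | O α => O (α.setLevel k)
  | G α => G (α.setLevel k)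

/-- The translation `σ_L` from LL to L: replace every `K_k`/`M_k` by `K`/`M`. -/
def toL : LLFormula → LFormula
  | atom a => .atom a
  | neg α => .neg α.toL
  | or α β => .or α.toL β.toL
  | ex x α => .ex x α.toL
  | K _ α => .K α.toL
  | M _ α => .M α.toL
  | O α => .O α.toL
  | G α => α.toL

/-- The ground literal denoted by a formula, if it is a ground literal. -/
def asLit? : LLFormula → Option GLit
  | atom a => a.toGLit? true
  | neg (atom a) => a.toGLit? false
  | _ => none

/-- The clause denoted by a formula, if it is a disjunction of ground literals. -/
def asClause? : LLFormula → Option Clause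
  | or α β => α.asClause?.bind fun c1 => β.asClause?.map fun c2 => c1 ∪ c2
  | α => α.asLit?.map fun g => ({g} : Clause)

/-- The atoms mentioned in a formula. -/
def atoms : LLFormula → Set Atom
  | atom a => {a}
  | neg α => α.atoms
  | or α β => α.atoms ∪ β.atoms
  | ex _ α => α.atoms
  | K _ α => α.atoms
  | M _ α => α.atoms
  | O α => α.atoms
  | G α => α.atoms

/-- The primitive terms occurring in `gnd α`, the groundings of `α`. -/
def primTerms (α : LLFormula) : Set PrimTerm :=
  {p | ∃ a ∈ α.atoms, ∃ σ : Var → Name,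
    sortPreserving σ ∧ a.lhs.applySub σ = GTerm.prim p}

/-- A literal: an atom or a negated atom. -/
def isLiteral : LLFormula → Prop
  | atom _ => True
  | neg (atom _) => True
  | _ => False

/-- A disjunction of literals. -/
def isClauseF : LLFormula → Prop
  | or α β => α.isClauseF ∧ β.isClauseF
  | α => α.isLiteral

/-- A universally quantified disjunction of literals `∀x1 ... ∀xj c`
    (where `∀x α` abbreviates `¬∃x¬α`). -/
def isUnivClause : LLFormula → Prop
  | neg (ex _ (neg α)) => α.isUnivClause
  | α => α.isClauseF

/-- Proper⁺: a conjunction of universally quantified clauses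
    (where `α ∧ β` abbreviates `¬(¬α ∨ ¬β)`). -/
def isProperPlus : LLFormula → Prop
  | neg (or (neg α) (neg β)) => α.isProperPlus ∧ β.isProperPlus
  | α => α.isUnivClause

/-- The conjuncts of a conjunction. -/
def conjuncts : LLFormula → Set LLFormula
  | neg (or (neg α) (neg β)) => α.conjuncts ∪ β.conjuncts
  | α => {α}

/-- Strip outer universal quantifiers. -/
def stripForall : LLFormula → LLFormula
  | neg (ex _ (neg α)) => α.stripForall
  | α => α

/-- The literals (polarity and atom) of a disjunction of literals. -/
def clauseLits : LLFormula → Finset (Bool × Atom)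
  | atom a => {(true, a)}
  | neg (atom a) => {(false, a)}
  | or α β => α.clauseLits ∪ β.clauseLits
  | _ => ∅

/-- `gnd φ` for a proper⁺ `φ`: the setup of all ground instances of its clauses. -/
def gnd (φ : LLFormula) : Setup :=
  {c | ∃ ψ ∈ φ.conjuncts, ∃ σ : Var → Name, sortPreserving σ ∧
        c = (ψ.stripForall.clauseLits).image fun p => Atom.applySub σ p.1 p.2}

def msize : LLFormula → ℕ
  | atom _ => 1
  | neg α => 2 * α.msize + 1
  | or α β => α.msize + β.msize + 1
  | ex _ α => α.msize + 1
  | K k α => α.msize + k + 1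
  | M k α => α.msize + k + 1
  | O α => α.msize + 1
  | G α => α.msize + 1

theorem msize_subst (x : Var) (n : Name) :
    ∀ α : LLFormula, (α.subst x n).msize = α.msize := by
  intro α
  induction α with
  | atom a => rfl
  | neg α ih => simp [subst, msize, ih]
  | or α β ih1 ih2 => simp [subst, msize, ih1, ih2]
  | ex y α ih =>
    simp only [subst]
    split <;> simp [msize, ih]
  | K k α ih => simp [subst, msize, ih]
  | M k α ih => simp [subst, msize, ih]
  | O α ih => simp [subst, msize, ih]
  | G α ih => simp [subst, msize, ih]

end LLFormula

/-- The setup of unit clauses corresponding to a set of literals. -/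
def litsSetup (v : Set GLit) : Setup := {c | ∃ l ∈ v, c = ({l} : Clause)}

def GTerm.mapNames (π : Name → Name) : GTerm → GTerm
  | .name n => .name (π n)
  | .prim t => .prim ⟨t.fn, t.args.map π⟩

def GLit.mapNames (π : Name → Name) (l : GLit) : GLit :=
  ⟨l.pos, l.lhs.mapNames π, π l.rhs⟩

/-- Two ground literals are isomorphic when one results from the other by a
    sort-preserving bijection of standard names. -/
def GLit.iso (l1 l2 : GLit) : Prop :=
  ∃ π : Name → Name, Function.Bijective π ∧ (∀ n : Name, (π n).sort = n.sort) ∧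
    l2 = l1.mapNames π

/-- `v ⊎_s ℓ`: add to `v` all literals isomorphic to `ℓ` whose negation is not in
    `VP (s ∪ v)`. -/
def uplusV (s : Setup) (v : Set GLit) (l : GLit) : Set GLit :=
  v ∪ {l' | GLit.iso l l' ∧ ({l'.negate} : Clause) ∉ VP (s ∪ litsSetup v)}

/-- `c` mentions the primitive term `p`. -/
def Clause.mentions (c : Clause) (p : PrimTerm) : Prop :=
  ∃ l ∈ c, l.lhs = GTerm.prim p

/-- `s0|_T`: the least set of clauses such that every clause of `WP s0` that mentions
    a term of `T`, or is empty, or shares a term with another clause of `s0|_T`,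
    is in `s0|_T`. -/
inductive RestrictMem (s0 : Setup) (T : Set PrimTerm) : Clause → Prop
  | ofT {c : Clause} : c ∈ WP s0 → (∃ p ∈ T, c.mentions p) → RestrictMem s0 T c
  | empty {c : Clause} : c ∈ WP s0 → c = ∅ → RestrictMem s0 T c
  | share {c c' : Clause} : c ∈ WP s0 → RestrictMem s0 T c' →
      (∃ p : PrimTerm, c.mentions p ∧ c'.mentions p) → RestrictMem s0 T c

def restrict (s0 : Setup) (T : Set PrimTerm) : Setup := {c | RestrictMem s0 T c}

/-- Semantics of LL: `LLSat s0 s v α` is `s0, s, v ⊨s α`. -/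
def LLSat : Setup → Setup → Set GLit → LLFormula → Prop
  | _, s, _, .atom a =>
    match a.toGLit? true with
    | some g => ({g} : Clause) ∈ VP s
    | none => False
  | _, s, _, .neg (.atom a) =>
    match a.toGLit? false with
    | some g => ({g} : Clause) ∈ VP s
    | none => False
  | s0, s, v, .or α β =>
    match (LLFormula.or α β).asClause? with
    | some c => c ∈ VP s
    | none => LLSat s0 s v α ∨ LLSat s0 s v β
  | s0, s, v, .ex x α => ∃ n : Name, n.sort = x.sort ∧ LLSat s0 s v (α.subst x n)
  | s0, s, v, .neg (.or α β) => LLSat s0 s v (.neg α) ∧ LLSat s0 s v (.neg β)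
  | s0, s, v, .neg (.ex x α) =>
      ∀ n : Name, n.sort = x.sort → LLSat s0 s v (.neg (α.subst x n))
  | s0, s, v, .neg (.neg α) => LLSat s0 s v α
  | s0, s, v, .neg (.K k α) => ¬ LLSat s0 s v (.K k α)
  | s0, s, v, .neg (.M k α) => ¬ LLSat s0 s v (.M k α)
  | s0, s, v, .neg (.O α) => ¬ LLSat s0 s v (.O α)
  | s0, s, v, .neg (.G α) => LLSat s0 s v (.G (.neg α))
  | s0, _, v, .K 0 α =>
      obviouslyIncons (s0 ∪ litsSetup v) ∨ LLSat s0 (s0 ∪ litsSetup v) ∅ α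
  | s0, s, v, .K (k+1) α =>
      ∃ t : PrimTerm, ∀ n : Name, n.sort = t.sort →
        LLSat s0 s (v ∪ {⟨true, GTerm.prim t, n⟩}) (.K k α)
  | s0, _, v, .M 0 α =>
      ¬ potentiallyIncons (s0 ∪ litsSetup v) ∧ LLSat s0 (s0 ∪ litsSetup v) ∅ α
  | s0, s, v, .M (k+1) α =>
      ∃ t : PrimTerm, ∃ n : Name, n.sort = t.sort ∧
        (LLSat s0 s (v ∪ {⟨true, GTerm.prim t, n⟩}) (.M k α) ∨
         LLSat s0 s (uplusV s0 v ⟨true, GTerm.prim t, n⟩) (.M k α))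
  | s0, _, _, .O φ =>
      LLSat s0 s0 ∅ φ ∧ ¬ ∃ t0 : Setup, VP t0 ⊂ VP s0 ∧ LLSat s0 t0 ∅ φ
  | s0, s, v, .G α => LLSat (restrict s0 α.primTerms) s v α
termination_by s0 s v α => α.msize
decreasing_by
  all_goals simp only [LLFormula.msize, LLFormula.msize_subst]
  all_goals omega

/-- Entailment between subjective LL sentences: truth in all setups. -/
def LLEntails (σ τ : LLFormula) : Prop :=
  ∀ (s0 s : Setup), LLSat s0 s ∅ σ → LLSat s0 s ∅ τ

theorem GLit.compl.symm {l m : GLit} (h : l.compl m) : m.compl l := by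
  rcases h with ⟨hlhs, hrhs, hpos⟩ | ⟨hl, hm, hlhs, hrhs⟩
  · exact Or.inl ⟨hlhs.symm, hrhs.symm, Ne.symm hpos⟩
  · exact Or.inr ⟨hm, hl, hlhs.symm, Ne.symm hrhs⟩

/-- The only proper subsumption is `t = n1` over `t ≠ n2`, and the only complement of
`t ≠ n2` is `t = n2`, which clashes with `t = n1`. -/
theorem GLit.subsumes.compl_left {l l' m : GLit} (h : l.subsumes l') (hc : l'.compl m) :
    l.compl m := by
  obtain rfl | ⟨hl, hl', hlhs, hrhs⟩ := h
  · exact hc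
  rcases hc with ⟨hlhs', hrhs', hpos⟩ | ⟨hl'', -⟩
  · exact Or.inr ⟨hl, by simpa [hl'] using hpos.symm, hlhs.trans hlhs', hrhs' ▸ hrhs⟩
  · simp [hl'] at hl''

theorem GLit.subsumes.compl {l l' m m' : GLit} (hl : l.subsumes l') (hm : m.subsumes m')
    (hc : l'.compl m') : l.compl m :=
  (hm.compl_left (hl.compl_left hc).symm).symm

theorem Clause.mem_unitProp {c : Clause} {l m : GLit} :
    m ∈ c.unitProp l ↔ m ∈ c ∧ ¬ m.compl l := by
  simp only [Clause.unitProp, Finset.mem_filter]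

/-- Subsumption is preserved by unit propagation: if `c1` subsumes `c2` and `l1`
subsumes `l2`, then the unit propagation of `c1` with `l1` subsumes the unit
propagation of `c2` with `l2`. -/
theorem clause_subsumes_unitProp (c1 c2 : Clause) (l1 l2 : GLit)
    (hc : c1.subsumes c2) (hl : l1.subsumes l2) :
    (c1.unitProp l1).subsumes (c2.unitProp l2) := by
  intro m hm
  rw [Clause.mem_unitProp] at hm
  obtain ⟨m', hm'c, hsub⟩ := hc m hm.1
  exact ⟨m', Clause.mem_unitProp.2 ⟨hm'c, fun hc' => hm.2 (hsub.compl hl hc')⟩, hsub⟩
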